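/- arXiv:math/0002070 — 2 statements merged into one kernel-verified Lean document; each statement's English description precedes it below -/
import Mathlib

section
/- Let G be a König-Egerváry graph. Then every α-critical edge of G is also μ-critical, i.e., if e ∈ E(G) satisfies α(G − e) > α(G), then μ(G − e) < μ(G). -/
/-!
Every matching edge has an endpoint outside any given stable set, and these endpoints are
distinct, so `α + μ ≤ |V|` in every graph. Applied to `G - e`, and compared with the equality
`α(G) + μ(G) = |V|`, an increase of `α` when `e` is deleted forces a decrease of `μ`.
-/

open scoped Classical

namespace KEG

variable {V : Type*}

/-- `S` is a stable (independent) set of vertices of `G`. -/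
def IsStable (G : SimpleGraph V) (S : Finset V) : Prop :=
  ∀ ⦃x⦄, x ∈ S → ∀ ⦃y⦄, y ∈ S → ¬G.Adj x y

/-- The stability number `α(G)`: maximum cardinality of a stable set. -/
noncomputable def alphaNum (G : SimpleGraph V) : ℕ :=
  sSup {n | ∃ S : Finset V, IsStable G S ∧ S.card = n}

/-- `S` is a maximum stable set of `G`. -/
def IsMaxStable (G : SimpleGraph V) (S : Finset V) : Prop :=
  IsStable G S ∧ S.card = alphaNum G

/-- `M` is a matching of `G`: a set of edges of `G`, pairwise non-incident. -/
def IsMatching (G : SimpleGraph V) (M : Finset (Sym2 V)) : Prop :=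
  (∀ e ∈ M, e ∈ G.edgeSet) ∧
    ∀ e ∈ M, ∀ f ∈ M, e ≠ f → ∀ v : V, v ∈ e → v ∉ f

/-- The matching number `μ(G)`: maximum cardinality of a matching. -/
noncomputable def muNum (G : SimpleGraph V) : ℕ :=
  sSup {n | ∃ M : Finset (Sym2 V), IsMatching G M ∧ M.card = n}

/-- A perfect matching: a matching covering every vertex. -/
def IsPerfectMatching (G : SimpleGraph V) (M : Finset (Sym2 V)) : Prop :=
  IsMatching G M ∧ ∀ v : V, ∃ e ∈ M, v ∈ e

/-- A maximal matching: a matching such that no edge of `G` can be added to it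
while keeping pairwise non-incidence, i.e. every edge of `G` outside `M` is
incident to an edge of `M`. -/
def IsMaximalMatching (G : SimpleGraph V) (M : Finset (Sym2 V)) : Prop :=
  IsMatching G M ∧ ∀ e ∈ G.edgeSet, e ∉ M → ∃ f ∈ M, ∃ v : V, v ∈ e ∧ v ∈ f

/-- `G` is a König-Egerváry graph: `α(G) + μ(G) = |V(G)|`. -/
def KonigEgervary (G : SimpleGraph V) [Fintype V] : Prop :=
  alphaNum G + muNum G = Fintype.card V

/-- `e` is an α-critical edge of `G`: `α(G - e) > α(G)`. -/
def IsAlphaCritical (G : SimpleGraph V) (e : Sym2 V) : Prop :=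
  e ∈ G.edgeSet ∧ alphaNum G < alphaNum (G.deleteEdges {e})

/-- `e` is a μ-critical edge of `G`: `μ(G - e) < μ(G)`. -/
def IsMuCritical (G : SimpleGraph V) (e : Sym2 V) : Prop :=
  e ∈ G.edgeSet ∧ muNum (G.deleteEdges {e}) < muNum G

/-- `core(G)`: the set of vertices belonging to every maximum stable set of `G`. -/
def core (G : SimpleGraph V) : Set V :=
  {v | ∀ S : Finset V, IsMaxStable G S → v ∈ S}

/-- `ξ(G) = |core(G)|`. -/
noncomputable def xi (G : SimpleGraph V) : ℕ := (core G).ncard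

/-- `σ(G)`: the number of vertices belonging to no maximum stable set of `G`. -/
noncomputable def sigmaNum (G : SimpleGraph V) : ℕ :=
  {v : V | ∀ S : Finset V, IsMaxStable G S → v ∉ S}.ncard

/-- `η(G)`: the number of α-critical edges of `G`. -/
noncomputable def eta (G : SimpleGraph V) : ℕ :=
  {e : Sym2 V | IsAlphaCritical G e}.ncard

/-- `N(A)`: the set of vertices adjacent to some vertex of `A`. -/
def nbhd (G : SimpleGraph V) (A : Set V) : Set V :=
  {v | ∃ a ∈ A, G.Adj a v}

/-- `N[A] = A ∪ N(A)`: the closed neighborhood of `A`. -/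
def closedNbhd (G : SimpleGraph V) (A : Set V) : Set V :=
  A ∪ nbhd G A

theorem IsStable.exists_mem_notMem_of_mem_edgeSet {G : SimpleGraph V} {S : Finset V}
    (hS : IsStable G S) {e : Sym2 V} (he : e ∈ G.edgeSet) : ∃ v ∈ e, v ∉ S := by
  induction e using Sym2.ind with
  | _ a b =>
    by_contra! h
    exact hS (h a (Sym2.mem_mk_left a b)) (h b (Sym2.mem_mk_right a b)) he

section Finite

variable [Fintype V] (G : SimpleGraph V)

theorem exists_isStable_card_eq_alphaNum : ∃ S : Finset V, IsStable G S ∧ S.card = alphaNum G :=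
  Nat.sSup_mem (s := {n | ∃ S : Finset V, IsStable G S ∧ S.card = n}) ⟨0, ∅, by simp [IsStable]⟩
    ⟨Fintype.card V, fun _ ⟨S, _, hS⟩ => hS ▸ S.card_le_univ⟩

theorem exists_isMatching_card_eq_muNum :
    ∃ M : Finset (Sym2 V), IsMatching G M ∧ M.card = muNum G :=
  Nat.sSup_mem (s := {n | ∃ M : Finset (Sym2 V), IsMatching G M ∧ M.card = n})
    ⟨0, ∅, by simp [IsMatching]⟩
    ⟨Fintype.card (Sym2 V), fun _ ⟨M, _, hM⟩ => hM ▸ M.card_le_univ⟩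

variable {G}

theorem IsStable.card_add_card_le_of_isMatching {S : Finset V} (hS : IsStable G S)
    {M : Finset (Sym2 V)} (hM : IsMatching G M) : S.card + M.card ≤ Fintype.card V := by
  have hM_le : M.card ≤ Sᶜ.card :=
    Finset.card_le_card_of_forall_subsingleton (fun f v => v ∈ f)
      (fun f hf => by
        obtain ⟨v, hvf, hvS⟩ := hS.exists_mem_notMem_of_mem_edgeSet (hM.1 f hf)
        exact ⟨v, by simpa using hvS, hvf⟩)
      (fun v _ f ⟨hf, hvf⟩ f' ⟨hf', hvf'⟩ => by_contra fun hne => hM.2 f hf f' hf' hne v hvf hvf')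
  rw [Finset.card_compl] at hM_le
  have := S.card_le_univ
  omega

variable (G)

theorem alphaNum_add_muNum_le : alphaNum G + muNum G ≤ Fintype.card V := by
  obtain ⟨S, hS, hS_card⟩ := exists_isStable_card_eq_alphaNum G
  obtain ⟨M, hM, hM_card⟩ := exists_isMatching_card_eq_muNum G
  rw [← hS_card, ← hM_card]
  exact hS.card_add_card_le_of_isMatching hM

end Finite

theorem stmt_1_general {V : Type*} [Fintype V] (G : SimpleGraph V)
    (hG : KonigEgervary G) (e : Sym2 V)
    (hcrit : alphaNum G < alphaNum (G.deleteEdges {e})) :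
    muNum (G.deleteEdges {e}) < muNum G := by
  have := alphaNum_add_muNum_le (G.deleteEdges {e})
  unfold KonigEgervary at hG
  omega

/-- In a König-Egerváry graph, every α-critical edge is also μ-critical. -/
theorem stmt_1 {V : Type*} [Fintype V] (G : SimpleGraph V)
    (hG : KonigEgervary G) (e : Sym2 V) (he : e ∈ G.edgeSet)
    (hcrit : alphaNum G < alphaNum (G.deleteEdges {e})) :
    muNum (G.deleteEdges {e}) < muNum G :=
  stmt_1_general G hG e hcrit

end KEG
end

section
/- Let G be any finite simple graph. Then no α-critical edge of G has an endpoint in the closed neighborhood N[core(G)] of core(G); that is, if e = xy is an edge with α(G − e) > α(G), then neither x nor y belongs to core(G) or is adjacent to a vertex of core(G). -/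
open scoped Classical

namespace KEG

variable {V : Type*}

section Stable

variable {G : SimpleGraph V} {S T : Finset V} {x y : V}

theorem bddAbove_stable_card [Finite V] (G : SimpleGraph V) :
    BddAbove {n | ∃ S : Finset V, IsStable G S ∧ S.card = n} := by
  cases nonempty_fintype V
  exact ⟨Fintype.card V, by rintro n ⟨S, -, rfl⟩; exact S.card_le_univ⟩

theorem IsStable.card_le_alphaNum [Finite V] (hS : IsStable G S) : S.card ≤ alphaNum G :=
  le_csSup (bddAbove_stable_card G) ⟨S, hS, rfl⟩

theorem exists_isMaxStable [Finite V] (G : SimpleGraph V) : ∃ S, IsMaxStable G S := by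
  have hne : {n | ∃ S : Finset V, IsStable G S ∧ S.card = n}.Nonempty :=
    ⟨0, ∅, fun _ h => absurd h (Finset.notMem_empty _), rfl⟩
  exact Nat.sSup_mem hne (bddAbove_stable_card G)

theorem IsStable.subset (hS : IsStable G S) (hTS : T ⊆ S) : IsStable G T :=
  fun _ ha _ hb => hS (hTS ha) (hTS hb)

theorem IsStable.of_deleteEdges (hS : IsStable (G.deleteEdges {s(x, y)}) S) (hx : x ∉ S) :
    IsStable G S := by
  intro a ha b hb hab
  refine hS ha hb (SimpleGraph.deleteEdges_adj.2 ⟨hab, ?_⟩)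
  rw [Set.mem_singleton_iff, Sym2.eq_iff]
  rintro (⟨rfl, rfl⟩ | ⟨rfl, rfl⟩)
  · exact hx ha
  · exact hx hb

theorem mem_of_isStable_deleteEdges [Finite V] (hS : IsStable (G.deleteEdges {s(x, y)}) S)
    (hgt : alphaNum G < S.card) : x ∈ S := by
  by_contra hx
  exact (hS.of_deleteEdges hx).card_le_alphaNum.not_gt hgt

theorem isMaxStable_erase_of_isStable_deleteEdges [Finite V]
    (hS : IsStable (G.deleteEdges {s(x, y)}) S) (hgt : alphaNum G < S.card) :
    IsMaxStable G (S.erase x) := by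
  have hstable : IsStable G (S.erase x) :=
    (hS.subset (S.erase_subset x)).of_deleteEdges (S.notMem_erase x)
  refine ⟨hstable, hstable.card_le_alphaNum.antisymm ?_⟩
  have := S.pred_card_le_card_erase (a := x)
  omega

/-- A maximum stable set `S` of `G - xy` is larger than `α(G)`, so it contains both endpoints and
`S - x`, `S - y` are maximum stable sets of `G`. Then `core(G) ⊆ S - x` avoids `x`, and a core
vertex adjacent to `x` would lie in the stable set `S - y` together with `x`. -/
theorem IsAlphaCritical.left_notMem_closedNbhd_core [Finite V] (h : IsAlphaCritical G s(x, y)) :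
    x ∉ closedNbhd G (core G) := by
  obtain ⟨hxy, hlt⟩ := h
  obtain ⟨S, hS, hcard⟩ := exists_isMaxStable (G.deleteEdges {s(x, y)})
  have hgt : alphaNum G < S.card := hcard ▸ hlt
  have hS' : IsStable (G.deleteEdges {s(y, x)}) S := by rwa [Sym2.eq_swap]
  have hxS : x ∈ S := mem_of_isStable_deleteEdges hS hgt
  have hSx : IsMaxStable G (S.erase x) := isMaxStable_erase_of_isStable_deleteEdges hS hgt
  have hSy : IsMaxStable G (S.erase y) := isMaxStable_erase_of_isStable_deleteEdges hS' hgt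
  rintro (hx | ⟨c, hc, hcx⟩)
  · exact S.notMem_erase x (hx _ hSx)
  · exact hSy.1 (hc _ hSy) (Finset.mem_erase.2 ⟨(G.mem_edgeSet.1 hxy).ne, hxS⟩) hcx

end Stable

/-- In any graph, no α-critical edge has an endpoint in `N[core(G)]`. -/
theorem stmt_11 {V : Type*} [Fintype V] (G : SimpleGraph V)
    (e : Sym2 V) (he : IsAlphaCritical G e) :
    ∀ v ∈ e, v ∉ closedNbhd G (core G) := by
  intro v hv
  rw [← Sym2.other_spec hv] at he
  exact he.left_notMem_closedNbhd_core

end KEG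
end
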